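/- arXiv:1102.2763 — 2 statements merged into one kernel-verified Lean document; each statement's English description precedes it below -/
import Mathlib

section
/- For vectors H^+, H^-, and w = [u] in ℝ³ with H^+ × H^- ≠ 0, if |H^+ × w|² + |H^- × w|² < 2|H^+ × H^-|², then |w|² < 2(|H^+|² + |H^-|²). -/
private lemma abstract_step (K2 S W pq R : ℝ) (hK : 0 < K2) (hS : 0 < S)
    (hid : K2 * (S * pq - K2 * W) = R) (hR : 0 ≤ R) (h : pq < 2 * K2) :
    W < 2 * S := by
  nlinarith [mul_pos hK hS, mul_pos hK hK]

private lemma esq3 (x : EuclideanSpace ℝ (Fin 3)) : ‖x‖ ^ 2 = x 0 ^ 2 + x 1 ^ 2 + x 2 ^ 2 := by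
  rw [EuclideanSpace.norm_eq, Real.sq_sqrt (by positivity)]
  simp [Fin.sum_univ_three, Real.norm_eq_abs, sq_abs]

set_option maxHeartbeats 1000000 in
private lemma cross3_key (a0 a1 a2 b0 b1 b2 w0 w1 w2 : ℝ)
    (hK : 0 < (a1*b2 - a2*b1)^2 + (a2*b0 - a0*b2)^2 + (a0*b1 - a1*b0)^2)
    (h : ((a1*w2 - a2*w1)^2 + (a2*w0 - a0*w2)^2 + (a0*w1 - a1*w0)^2)
       + ((b1*w2 - b2*w1)^2 + (b2*w0 - b0*w2)^2 + (b0*w1 - b1*w0)^2)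
       < 2 * ((a1*b2 - a2*b1)^2 + (a2*b0 - a0*b2)^2 + (a0*b1 - a1*b0)^2)) :
    w0^2 + w1^2 + w2^2 < 2 * ((a0^2 + a1^2 + a2^2) + (b0^2 + b1^2 + b2^2)) := by
  have hAB : (a1*b2 - a2*b1)^2 + (a2*b0 - a0*b2)^2 + (a0*b1 - a1*b0)^2
      ≤ (a0^2 + a1^2 + a2^2) * (b0^2 + b1^2 + b2^2) := by
    nlinarith [sq_nonneg (a0*b0 + a1*b1 + a2*b2)]
  have hS : 0 < (a0^2 + a1^2 + a2^2) + (b0^2 + b1^2 + b2^2) := by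
    nlinarith [lt_of_lt_of_le hK hAB, sq_nonneg a0, sq_nonneg a1, sq_nonneg a2,
      sq_nonneg b0, sq_nonneg b1, sq_nonneg b2]
  refine abstract_step _ _ _ _
    (((((a1*b2 - a2*b1)*(b1*w2 - b2*w1) + (a2*b0 - a0*b2)*(b2*w0 - b0*w2) + (a0*b1 - a1*b0)*(b0*w1 - b1*w0))*b0
          + ((a1*b2 - a2*b1)*(a1*w2 - a2*w1) + (a2*b0 - a0*b2)*(a2*w0 - a0*w2) + (a0*b1 - a1*b0)*(a0*w1 - a1*w0))*a0)^2
        + (((a1*b2 - a2*b1)*(b1*w2 - b2*w1) + (a2*b0 - a0*b2)*(b2*w0 - b0*w2) + (a0*b1 - a1*b0)*(b0*w1 - b1*w0))*b1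
          + ((a1*b2 - a2*b1)*(a1*w2 - a2*w1) + (a2*b0 - a0*b2)*(a2*w0 - a0*w2) + (a0*b1 - a1*b0)*(a0*w1 - a1*w0))*a1)^2
        + (((a1*b2 - a2*b1)*(b1*w2 - b2*w1) + (a2*b0 - a0*b2)*(b2*w0 - b0*w2) + (a0*b1 - a1*b0)*(b0*w1 - b1*w0))*b2
          + ((a1*b2 - a2*b1)*(a1*w2 - a2*w1) + (a2*b0 - a0*b2)*(a2*w0 - a0*w2) + (a0*b1 - a1*b0)*(a0*w1 - a1*w0))*a2)^2)
      + ((a1*b2 - a2*b1)*w0 + (a2*b0 - a0*b2)*w1 + (a0*b1 - a1*b0)*w2)^2 *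
          (((a0^2+a1^2+a2^2) - (b0^2+b1^2+b2^2))^2
            + 3*((a0^2+a1^2+a2^2)*(b0^2+b1^2+b2^2))
            + (a0*b0 + a1*b1 + a2*b2)^2))
    hK hS (by ring) (by positivity) h

/-- The cross product on `ℝ³` with the Euclidean norm. -/
noncomputable def cross3 (a b : EuclideanSpace ℝ (Fin 3)) : EuclideanSpace ℝ (Fin 3) :=
  (WithLp.equiv 2 (Fin 3 → ℝ)).symm
    (crossProduct ((WithLp.equiv 2 (Fin 3 → ℝ)) a) ((WithLp.equiv 2 (Fin 3 → ℝ)) b))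

private lemma cross3_apply0 (a b : EuclideanSpace ℝ (Fin 3)) :
    cross3 a b 0 = a 1 * b 2 - a 2 * b 1 := rfl
private lemma cross3_apply1 (a b : EuclideanSpace ℝ (Fin 3)) :
    cross3 a b 1 = a 2 * b 0 - a 0 * b 2 := rfl
private lemma cross3_apply2 (a b : EuclideanSpace ℝ (Fin 3)) :
    cross3 a b 2 = a 0 * b 1 - a 1 * b 0 := rfl

/-- If `H⁺ × H⁻ ≠ 0` and `|H⁺ × w|² + |H⁻ × w|² < 2|H⁺ × H⁻|²`, then
`|w|² < 2(|H⁺|² + |H⁻|²)`. -/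
theorem stability_condition_implication
    (Hp Hm w : EuclideanSpace ℝ (Fin 3))
    (hne : cross3 Hp Hm ≠ 0)
    (h : ‖cross3 Hp w‖ ^ 2 + ‖cross3 Hm w‖ ^ 2 < 2 * ‖cross3 Hp Hm‖ ^ 2) :
    ‖w‖ ^ 2 < 2 * (‖Hp‖ ^ 2 + ‖Hm‖ ^ 2) := by
  have hK : 0 < ‖cross3 Hp Hm‖ ^ 2 := pow_pos (norm_pos_iff.mpr hne) 2
  rw [esq3, cross3_apply0, cross3_apply1, cross3_apply2] at hK
  rw [esq3, esq3, esq3, cross3_apply0, cross3_apply1, cross3_apply2,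
    cross3_apply0, cross3_apply1, cross3_apply2,
    cross3_apply0, cross3_apply1, cross3_apply2] at h
  rw [esq3 w, esq3 Hp, esq3 Hm]
  exact cross3_key (Hp 0) (Hp 1) (Hp 2) (Hm 0) (Hm 1) (Hm 2) (w 0) (w 1) (w 2) hK h
end

section
/- The product map (f,g) ↦ fg is continuous from H^{1/2}(𝕋²) × H^{3/2}(𝕋²) to H^{1/2}(𝕋²): there is C > 0 with ‖fg‖_{H^{1/2}} ≤ C ‖f‖_{H^{1/2}} ‖g‖_{H^{3/2}} for all f ∈ H^{1/2}(𝕋²), g ∈ H^{3/2}(𝕋²). -/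
/-- Squared modulus `|n|²` of a frequency `n ∈ ℤ²`. -/
def freqSq (n : ℤ × ℤ) : ℝ := (n.1 : ℝ) ^ 2 + (n.2 : ℝ) ^ 2

/-- The `H^s(𝕋²)` norm of a function given through its Fourier coefficients
`c : ℤ² → ℂ`, namely `(∑_{n} (1+|n|²)^s |c_n|²)^{1/2}`. -/
noncomputable def HsNorm (s : ℝ) (c : ℤ × ℤ → ℂ) : ℝ :=
  Real.sqrt (∑' n : ℤ × ℤ, (1 + freqSq n) ^ s * ‖c n‖ ^ 2)

/-- The Fourier coefficients of the product `fg` are the convolution of those of `f`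
and `g`. -/
noncomputable def fourierConv (c d : ℤ × ℤ → ℂ) : ℤ × ℤ → ℂ :=
  fun n => ∑' m : ℤ × ℤ, c m * d (n - m)

lemma freqSq_nonneg (n : ℤ × ℤ) : 0 ≤ freqSq n := add_nonneg (sq_nonneg _) (sq_nonneg _)

lemma one_le_base (n : ℤ × ℤ) : (1:ℝ) ≤ 1 + freqSq n := by have := freqSq_nonneg n; linarith

lemma base_pos (n : ℤ × ℤ) : (0:ℝ) < 1 + freqSq n := lt_of_lt_of_le one_pos (one_le_base n)

lemma summable_nat_aux : Summable (fun n : ℕ => (1 + (n:ℝ)^2) ^ (-(3/4) : ℝ)) := by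
  have h1 : Summable (fun n : ℕ => 1 / |(n:ℝ) + 1| ^ ((3:ℝ)/2)) :=
    (Real.summable_one_div_nat_add_rpow 1 ((3:ℝ)/2)).mpr (by norm_num)
  apply Summable.of_nonneg_of_le (fun n => by positivity) _ (h1.mul_left ((2:ℝ) ^ ((3:ℝ)/4)))
  intro n
  have hn : (0:ℝ) < (n:ℝ) + 1 := by positivity
  have hx : (0:ℝ) < 1 + (n:ℝ)^2 := by positivity
  have habs : |(n:ℝ) + 1| = (n:ℝ) + 1 := abs_of_pos hn
  rw [habs]
  have key : ((n:ℝ)+1) ^ ((3:ℝ)/2) ≤ (2*(1+(n:ℝ)^2)) ^ ((3:ℝ)/4) := by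
    have h2 : ((n:ℝ)+1) ^ (2:ℕ) ≤ 2*(1+(n:ℝ)^2) := by nlinarith [sq_nonneg ((n:ℝ)-1)]
    calc ((n:ℝ)+1) ^ ((3:ℝ)/2) = (((n:ℝ)+1) ^ (2:ℕ)) ^ ((3:ℝ)/4) := by
          rw [← Real.rpow_natCast ((n:ℝ)+1) 2, ← Real.rpow_mul (by positivity)]; norm_num
      _ ≤ _ := Real.rpow_le_rpow (by positivity) h2 (by norm_num)
  have hsplit : (2*(1+(n:ℝ)^2)) ^ ((3:ℝ)/4) = 2 ^ ((3:ℝ)/4) * (1+(n:ℝ)^2) ^ ((3:ℝ)/4) :=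
    Real.mul_rpow (by norm_num) hx.le
  rw [Real.rpow_neg hx.le]
  have h3 : ((1+(n:ℝ)^2) ^ ((3:ℝ)/4))⁻¹ ≤ 2 ^ ((3:ℝ)/4) * (1 / ((n:ℝ)+1) ^ ((3:ℝ)/2)) := by
    rw [mul_one_div, inv_eq_one_div, div_le_div_iff₀ (by positivity) (by positivity)]
    calc 1 * ((n:ℝ)+1) ^ ((3:ℝ)/2) = ((n:ℝ)+1) ^ ((3:ℝ)/2) := one_mul _
      _ ≤ 2 ^ ((3:ℝ)/4) * (1+(n:ℝ)^2) ^ ((3:ℝ)/4) := by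
          rw [← hsplit]; linarith
  exact h3

lemma summable_int_aux : Summable (fun k : ℤ => (1 + (k:ℝ)^2) ^ (-(3/4) : ℝ)) := by
  apply Summable.of_nat_of_neg
  · exact summable_nat_aux.congr (by intro n; norm_num)
  · exact summable_nat_aux.congr (by intro n; push_cast; norm_num)

lemma summable_K : Summable (fun k : ℤ × ℤ => (1 + freqSq k) ^ (-(3/2) : ℝ)) := by
  have hp : Summable (fun p : ℤ × ℤ =>
      (1+(p.1:ℝ)^2) ^ (-(3/4):ℝ) * (1+(p.2:ℝ)^2) ^ (-(3/4):ℝ)) :=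
    summable_int_aux.mul_of_nonneg summable_int_aux
      (fun i => by positivity) (fun i => by positivity)
  apply Summable.of_nonneg_of_le (fun k => Real.rpow_nonneg (base_pos k).le _) _ hp
  intro k
  have hx1 : (0:ℝ) < 1 + (k.1:ℝ)^2 := by positivity
  have hx2 : (0:ℝ) < 1 + (k.2:ℝ)^2 := by positivity
  have hz := base_pos k
  have h1 : (1+(k.1:ℝ)^2) * (1+(k.2:ℝ)^2) ≤ (1 + freqSq k)^(2:ℕ) := by
    unfold freqSq
    nlinarith [sq_nonneg ((k.1:ℝ)*(k.2:ℝ)), sq_nonneg (k.1:ℝ), sq_nonneg (k.2:ℝ),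
      sq_nonneg ((k.1:ℝ)^2 - (k.2:ℝ)^2)]
  have h2 := Real.rpow_le_rpow (by positivity) h1 (by norm_num : (0:ℝ) ≤ 3/4)
  have e1 : ((1 + freqSq k)^(2:ℕ)) ^ ((3:ℝ)/4) = (1 + freqSq k) ^ ((3:ℝ)/2) := by
    rw [← Real.rpow_natCast (1 + freqSq k) 2, ← Real.rpow_mul hz.le]; norm_num
  have e2 : ((1+(k.1:ℝ)^2) * (1+(k.2:ℝ)^2)) ^ ((3:ℝ)/4)
      = (1+(k.1:ℝ)^2) ^ ((3:ℝ)/4) * (1+(k.2:ℝ)^2) ^ ((3:ℝ)/4) := Real.mul_rpow hx1.le hx2.le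
  rw [e1, e2] at h2
  have hfin : ((1 + freqSq k) ^ ((3:ℝ)/2))⁻¹
      ≤ ((1+(k.1:ℝ)^2) ^ ((3:ℝ)/4) * (1+(k.2:ℝ)^2) ^ ((3:ℝ)/4))⁻¹ := by
    exact inv_anti₀ (by positivity) h2
  calc (1 + freqSq k) ^ (-(3/2):ℝ) = ((1 + freqSq k) ^ ((3:ℝ)/2))⁻¹ := by
        rw [← Real.rpow_neg hz.le]
    _ ≤ ((1+(k.1:ℝ)^2) ^ ((3:ℝ)/4) * (1+(k.2:ℝ)^2) ^ ((3:ℝ)/4))⁻¹ := hfin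
    _ = (1+(k.1:ℝ)^2) ^ (-(3/4):ℝ) * (1+(k.2:ℝ)^2) ^ (-(3/4):ℝ) := by
        rw [mul_inv, ← Real.rpow_neg hx1.le, ← Real.rpow_neg hx2.le]

lemma rpow_sq_aux {x : ℝ} (hx : 0 < x) (a : ℝ) : (x ^ a) ^ (2:ℕ) = x ^ (2*a) := by
  rw [← Real.rpow_natCast (x ^ a) 2, ← Real.rpow_mul hx.le]
  ring_nf

lemma four_rpow_half : (4:ℝ) ^ ((1:ℝ)/2) = 2 := by
  rw [show (4:ℝ) = 2^(2:ℕ) by norm_num, ← Real.rpow_natCast 2 2,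
    ← Real.rpow_mul (by norm_num : (0:ℝ) ≤ 2)]
  norm_num

lemma kernel_aux {x y z : ℝ} (hx : 1 ≤ x) (hy : 1 ≤ y) (hz0 : 0 < z) (hz : z ≤ 2*x + 2*y) :
    z ^ ((1:ℝ)/2) * (x ^ (-(1/2):ℝ) * y ^ (-(3/2):ℝ))
      ≤ 2 * (x ^ (-(3/2):ℝ) + y ^ (-(3/2):ℝ)) := by
  have hx0 : (0:ℝ) < x := by linarith
  have hy0 : (0:ℝ) < y := by linarith
  rcases le_total x y with h | h
  · have h1 : z ^ ((1:ℝ)/2) ≤ 2 * y ^ ((1:ℝ)/2) := by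
      calc z ^ ((1:ℝ)/2) ≤ (4*y) ^ ((1:ℝ)/2) :=
            Real.rpow_le_rpow hz0.le (by linarith) (by norm_num)
        _ = 2 * y ^ ((1:ℝ)/2) := by rw [Real.mul_rpow (by norm_num) hy0.le, four_rpow_half]
    have step : z ^ ((1:ℝ)/2) * (x ^ (-(1/2):ℝ) * y ^ (-(3/2):ℝ)) ≤ 2 * x ^ (-(3/2):ℝ) := by
      calc z ^ ((1:ℝ)/2) * (x ^ (-(1/2):ℝ) * y ^ (-(3/2):ℝ))
          ≤ (2 * y ^ ((1:ℝ)/2)) * (x ^ (-(1/2):ℝ) * y ^ (-(3/2):ℝ)) := by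
            apply mul_le_mul_of_nonneg_right h1 (by positivity)
        _ = 2 * (x ^ (-(1/2):ℝ) * (y ^ ((1:ℝ)/2) * y ^ (-(3/2):ℝ))) := by ring
        _ = 2 * (x ^ (-(1/2):ℝ) * y ^ (-(1:ℝ))) := by
            rw [← Real.rpow_add hy0]; norm_num
        _ ≤ 2 * (x ^ (-(1/2):ℝ) * x ^ (-(1:ℝ))) := by
            have h2 := Real.rpow_le_rpow_of_nonpos hx0 h (by norm_num : (-(1:ℝ)) ≤ 0)
            have h3 : (0:ℝ) ≤ x ^ (-(1/2):ℝ) := by positivity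
            nlinarith
        _ = 2 * x ^ (-(3/2):ℝ) := by rw [← Real.rpow_add hx0]; norm_num
    have : (0:ℝ) ≤ y ^ (-(3/2):ℝ) := by positivity
    linarith
  · have h1 : z ^ ((1:ℝ)/2) ≤ 2 * x ^ ((1:ℝ)/2) := by
      calc z ^ ((1:ℝ)/2) ≤ (4*x) ^ ((1:ℝ)/2) :=
            Real.rpow_le_rpow hz0.le (by linarith) (by norm_num)
        _ = 2 * x ^ ((1:ℝ)/2) := by rw [Real.mul_rpow (by norm_num) hx0.le, four_rpow_half]
    have step : z ^ ((1:ℝ)/2) * (x ^ (-(1/2):ℝ) * y ^ (-(3/2):ℝ)) ≤ 2 * y ^ (-(3/2):ℝ) := by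
      calc z ^ ((1:ℝ)/2) * (x ^ (-(1/2):ℝ) * y ^ (-(3/2):ℝ))
          ≤ (2 * x ^ ((1:ℝ)/2)) * (x ^ (-(1/2):ℝ) * y ^ (-(3/2):ℝ)) := by
            apply mul_le_mul_of_nonneg_right h1 (by positivity)
        _ = 2 * ((x ^ ((1:ℝ)/2) * x ^ (-(1/2):ℝ)) * y ^ (-(3/2):ℝ)) := by ring
        _ = 2 * (x ^ (0:ℝ) * y ^ (-(3/2):ℝ)) := by rw [← Real.rpow_add hx0]; norm_num
        _ = 2 * y ^ (-(3/2):ℝ) := by rw [Real.rpow_zero, one_mul]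
    have : (0:ℝ) ≤ x ^ (-(3/2):ℝ) := by positivity
    linarith

lemma tsum_cauchy_schwarz {ι : Type*} {u v : ι → ℝ} (hu : ∀ i, 0 ≤ u i) (hv : ∀ i, 0 ≤ v i)
    (h2u : Summable fun i => u i ^ 2) (h2v : Summable fun i => v i ^ 2) :
    (∑' i, u i * v i) ^ 2 ≤ (∑' i, u i ^ 2) * (∑' i, v i ^ 2) := by
  have huv : Summable fun i => u i * v i := by
    apply Summable.of_nonneg_of_le (fun i => mul_nonneg (hu i) (hv i))
      (fun i => ?_) ((h2u.add h2v).div_const 2)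
    nlinarith [sq_nonneg (u i - v i)]
  have hA : 0 ≤ ∑' i, u i ^ 2 := tsum_nonneg fun i => sq_nonneg _
  have hB : 0 ≤ ∑' i, v i ^ 2 := tsum_nonneg fun i => sq_nonneg _
  have key : ∑' i, u i * v i ≤ Real.sqrt (∑' i, u i ^ 2) * Real.sqrt (∑' i, v i ^ 2) := by
    apply Summable.tsum_le_of_sum_le huv
    intro s
    have hcs := Finset.sum_mul_sq_le_sq_mul_sq s u v
    have h1 : ∑ i ∈ s, u i ^ 2 ≤ ∑' i, u i ^ 2 := Summable.sum_le_tsum s (fun i _ => sq_nonneg _) h2u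
    have h2 : ∑ i ∈ s, v i ^ 2 ≤ ∑' i, v i ^ 2 := Summable.sum_le_tsum s (fun i _ => sq_nonneg _) h2v
    have hs : 0 ≤ ∑ i ∈ s, u i * v i := Finset.sum_nonneg fun i _ => mul_nonneg (hu i) (hv i)
    rw [← Real.sqrt_mul hA]
    rw [Real.le_sqrt hs]
    calc (∑ i ∈ s, u i * v i) ^ 2 ≤ (∑ i ∈ s, u i ^ 2) * ∑ i ∈ s, v i ^ 2 := hcs
      _ ≤ (∑' i, u i ^ 2) * (∑' i, v i ^ 2) := by
          apply mul_le_mul h1 h2 (Finset.sum_nonneg fun i _ => sq_nonneg _) hA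
    · exact mul_nonneg hA hB
  calc (∑' i, u i * v i) ^ 2 ≤ (Real.sqrt (∑' i, u i ^ 2) * Real.sqrt (∑' i, v i ^ 2)) ^ 2 := by
        apply pow_le_pow_left₀ (tsum_nonneg fun i => mul_nonneg (hu i) (hv i)) key
    _ = (∑' i, u i ^ 2) * (∑' i, v i ^ 2) := by
        rw [mul_pow, Real.sq_sqrt hA, Real.sq_sqrt hB]

lemma freq_tri (n m : ℤ × ℤ) : freqSq n ≤ 2 * freqSq m + 2 * freqSq (n - m) := by
  have e1 : ((n - m).1 : ℝ) = (n.1 : ℝ) - (m.1 : ℝ) := by rw [Prod.fst_sub]; push_cast; ring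
  have e2 : ((n - m).2 : ℝ) = (n.2 : ℝ) - (m.2 : ℝ) := by rw [Prod.snd_sub]; push_cast; ring
  unfold freqSq
  rw [e1, e2]
  nlinarith [sq_nonneg ((n.1:ℝ) - 2*(m.1:ℝ)), sq_nonneg ((n.2:ℝ) - 2*(m.2:ℝ))]

/-- The product map is continuous from `H^{1/2}(𝕋²) × H^{3/2}(𝕋²)` to `H^{1/2}(𝕋²)`:
`‖fg‖_{H^{1/2}} ≤ C ‖f‖_{H^{1/2}} ‖g‖_{H^{3/2}}`, expressed on Fourier coefficients
(the coefficients of the product being the convolution of the coefficients). -/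
theorem product_estimate_H_half_H_threehalf :
    ∃ C > 0, ∀ c d : ℤ × ℤ → ℂ,
      Summable (fun n : ℤ × ℤ => (1 + freqSq n) ^ ((1 : ℝ) / 2) * ‖c n‖ ^ 2) →
      Summable (fun n : ℤ × ℤ => (1 + freqSq n) ^ ((3 : ℝ) / 2) * ‖d n‖ ^ 2) →
      HsNorm ((1 : ℝ) / 2) (fourierConv c d) ≤
        C * HsNorm ((1 : ℝ) / 2) c * HsNorm ((3 : ℝ) / 2) d := by
  classical
  set S : ℝ := ∑' k : ℤ × ℤ, (1 + freqSq k) ^ (-(3/2) : ℝ) with hSdef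
  have hK := summable_K
  have hKnn : ∀ k : ℤ × ℤ, 0 ≤ (1 + freqSq k) ^ (-(3/2) : ℝ) :=
    fun k => Real.rpow_nonneg (base_pos k).le _
  have hSpos : 0 < S :=
    Summable.tsum_pos hK hKnn (0,0) (Real.rpow_pos_of_pos (base_pos _) _)
  refine ⟨2 * Real.sqrt S, by positivity, ?_⟩
  intro c d hc hd
  set P : ℤ × ℤ → ℝ := fun n => (1 + freqSq n) ^ ((1:ℝ)/2) * ‖c n‖ ^ 2 with hPdef
  set Q : ℤ × ℤ → ℝ := fun n => (1 + freqSq n) ^ ((3:ℝ)/2) * ‖d n‖ ^ 2 with hQdef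
  have hc' : Summable P := hc
  have hd' : Summable Q := hd
  have hPnn : ∀ m, 0 ≤ P m :=
    fun m => mul_nonneg (Real.rpow_nonneg (base_pos m).le _) (sq_nonneg _)
  have hQnn : ∀ m, 0 ≤ Q m :=
    fun m => mul_nonneg (Real.rpow_nonneg (base_pos m).le _) (sq_nonneg _)
  set A : ℝ := ∑' m, P m with hAdef
  set B : ℝ := ∑' m, Q m with hBdef
  have hA : 0 ≤ A := tsum_nonneg hPnn
  have hB : 0 ≤ B := tsum_nonneg hQnn
  have hsqrtP : ∀ m, Real.sqrt (P m) = (1 + freqSq m) ^ ((1:ℝ)/4) * ‖c m‖ := by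
    intro m
    simp only [hPdef]
    rw [Real.sqrt_mul (Real.rpow_nonneg (base_pos m).le _), Real.sqrt_sq (norm_nonneg _)]
    congr 1
    rw [Real.sqrt_eq_rpow, ← Real.rpow_mul (base_pos m).le]
    norm_num
  have hsqrtQ : ∀ m, Real.sqrt (Q m) = (1 + freqSq m) ^ ((3:ℝ)/4) * ‖d m‖ := by
    intro m
    simp only [hQdef]
    rw [Real.sqrt_mul (Real.rpow_nonneg (base_pos m).le _), Real.sqrt_sq (norm_nonneg _)]
    congr 1
    rw [Real.sqrt_eq_rpow, ← Real.rpow_mul (base_pos m).le]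
    norm_num
  set G : ℤ × ℤ → ℝ := fun n => ∑' m, P m * Q (n - m) with hGdef
  -- main pointwise estimate
  have main : ∀ n, (1 + freqSq n) ^ ((1:ℝ)/2) * ‖fourierConv c d n‖ ^ 2 ≤ (4*S) * G n := by
    intro n
    set u : ℤ × ℤ → ℝ := fun m => Real.sqrt (P m) * Real.sqrt (Q (n - m)) with hudef
    set v : ℤ × ℤ → ℝ :=
      fun m => (1 + freqSq m) ^ (-(1/4):ℝ) * (1 + freqSq (n-m)) ^ (-(3/4):ℝ) with hvdef
    have hunn : ∀ m, 0 ≤ u m := fun m => mul_nonneg (Real.sqrt_nonneg _) (Real.sqrt_nonneg _)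
    have hvnn : ∀ m, 0 ≤ v m := fun m =>
      mul_nonneg (Real.rpow_nonneg (base_pos _).le _) (Real.rpow_nonneg (base_pos _).le _)
    have husq : ∀ m, u m ^ 2 = P m * Q (n-m) := by
      intro m
      simp only [hudef]
      rw [mul_pow, Real.sq_sqrt (hPnn m), Real.sq_sqrt (hQnn _)]
    have hvsq : ∀ m, v m ^ 2
        = (1 + freqSq m) ^ (-(1/2):ℝ) * (1 + freqSq (n-m)) ^ (-(3/2):ℝ) := by
      intro m
      simp only [hvdef]
      rw [mul_pow, rpow_sq_aux (base_pos m), rpow_sq_aux (base_pos (n-m))]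
      norm_num
    have hnorm_eq : ∀ m, ‖c m‖ * ‖d (n-m)‖ = u m * v m := by
      intro m
      have e1 : (1 + freqSq m) ^ ((1:ℝ)/4) * (1 + freqSq m) ^ (-(1/4):ℝ) = 1 := by
        rw [← Real.rpow_add (base_pos m)]; norm_num
      have e2 : (1 + freqSq (n-m)) ^ ((3:ℝ)/4) * (1 + freqSq (n-m)) ^ (-(3/4):ℝ) = 1 := by
        rw [← Real.rpow_add (base_pos (n-m))]; norm_num
      have expand : u m * v m
          = ((1 + freqSq m) ^ ((1:ℝ)/4) * (1 + freqSq m) ^ (-(1/4):ℝ))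
            * ((1 + freqSq (n-m)) ^ ((3:ℝ)/4) * (1 + freqSq (n-m)) ^ (-(3/4):ℝ))
            * (‖c m‖ * ‖d (n-m)‖) := by
        simp only [hudef, hvdef]
        rw [hsqrtP m, hsqrtQ (n-m)]; ring
      rw [expand, e1, e2]; ring
    have hQshift : Summable (fun m => Q (n - m)) := by
      have h := ((Equiv.subLeft n).summable_iff (f := Q)).mpr hd'
      simpa [Function.comp_def] using h
    have hPle : ∀ m, P m ≤ A := fun m => Summable.le_tsum hc' m (fun j _ => hPnn j)
    have h2u' : Summable (fun m => P m * Q (n - m)) := by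
      apply Summable.of_nonneg_of_le (fun m => mul_nonneg (hPnn m) (hQnn _)) _
        (hQshift.mul_left A)
      intro m
      exact mul_le_mul_of_nonneg_right (hPle m) (hQnn _)
    have h2u : Summable (fun m => u m ^ 2) := h2u'.congr (fun m => (husq m).symm)
    have hKshift : Summable (fun m => (1 + freqSq (n-m)) ^ (-(3/2):ℝ)) := by
      have h := ((Equiv.subLeft n).summable_iff
        (f := fun k => (1 + freqSq k) ^ (-(3/2):ℝ))).mpr hK
      simpa [Function.comp_def] using h
    have h2v : Summable (fun m => v m ^ 2) := by
      apply Summable.of_nonneg_of_le (fun m => sq_nonneg _) _ hKshift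
      intro m
      rw [hvsq m]
      have h1 : (1 + freqSq m) ^ (-(1/2):ℝ) ≤ 1 :=
        Real.rpow_le_one_of_one_le_of_nonpos (one_le_base m) (by norm_num)
      exact mul_le_of_le_one_left (hKnn _) h1
    have huvsummable : Summable (fun m => u m * v m) := by
      apply Summable.of_nonneg_of_le (fun m => mul_nonneg (hunn m) (hvnn m))
        (fun m => ?_) ((h2u.add h2v).div_const 2)
      nlinarith [sq_nonneg (u m - v m)]
    have hnormconv : ‖fourierConv c d n‖ ≤ ∑' m, u m * v m := by
      have hsn : Summable (fun m => ‖c m * d (n - m)‖) :=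
        huvsummable.congr (fun m => by rw [← hnorm_eq m, norm_mul])
      calc ‖fourierConv c d n‖ ≤ ∑' m, ‖c m * d (n - m)‖ := norm_tsum_le_tsum_norm hsn
        _ = ∑' m, u m * v m := tsum_congr (fun m => by rw [norm_mul, hnorm_eq m])
    have hsq : ‖fourierConv c d n‖ ^ 2 ≤ G n * (∑' m, v m ^ 2) := by
      calc ‖fourierConv c d n‖ ^ 2 ≤ (∑' m, u m * v m) ^ 2 :=
            pow_le_pow_left₀ (norm_nonneg _) hnormconv 2
        _ ≤ (∑' m, u m ^ 2) * (∑' m, v m ^ 2) := tsum_cauchy_schwarz hunn hvnn h2u h2v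
        _ = G n * (∑' m, v m ^ 2) := by simp only [hGdef]; rw [tsum_congr husq]
    have hGnn : 0 ≤ G n := tsum_nonneg (fun m => mul_nonneg (hPnn m) (hQnn _))
    have hw : (1 + freqSq n) ^ ((1:ℝ)/2) * (∑' m, v m ^ 2) ≤ 4 * S := by
      rw [← tsum_mul_left]
      have hmaj : Summable (fun m =>
          2 * ((1 + freqSq m) ^ (-(3/2):ℝ) + (1 + freqSq (n-m)) ^ (-(3/2):ℝ))) :=
        (hK.add hKshift).mul_left 2
      have hle : ∀ m, (1 + freqSq n) ^ ((1:ℝ)/2) * v m ^ 2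
          ≤ 2 * ((1 + freqSq m) ^ (-(3/2):ℝ) + (1 + freqSq (n-m)) ^ (-(3/2):ℝ)) := by
        intro m
        rw [hvsq m]
        apply kernel_aux (one_le_base m) (one_le_base (n-m)) (base_pos n)
        have := freq_tri n m
        linarith
      calc ∑' m, (1 + freqSq n) ^ ((1:ℝ)/2) * v m ^ 2
          ≤ ∑' m, 2 * ((1 + freqSq m) ^ (-(3/2):ℝ) + (1 + freqSq (n-m)) ^ (-(3/2):ℝ)) :=
            Summable.tsum_le_tsum hle ((h2v).mul_left _) hmaj
        _ = 2 * (S + S) := by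
            rw [tsum_mul_left, Summable.tsum_add hK hKshift, hSdef]
            congr 2
            have h := (Equiv.subLeft n).tsum_eq (fun k => (1 + freqSq k) ^ (-(3/2):ℝ))
            simpa using h
        _ = 4 * S := by ring
    calc (1 + freqSq n) ^ ((1:ℝ)/2) * ‖fourierConv c d n‖ ^ 2
        ≤ (1 + freqSq n) ^ ((1:ℝ)/2) * (G n * ∑' m, v m ^ 2) :=
          mul_le_mul_of_nonneg_left hsq (Real.rpow_nonneg (base_pos n).le _)
      _ = G n * ((1 + freqSq n) ^ ((1:ℝ)/2) * ∑' m, v m ^ 2) := by ring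
      _ ≤ G n * (4*S) := mul_le_mul_of_nonneg_left hw hGnn
      _ = (4*S) * G n := by ring
  -- Fubini for G
  have hHprod : Summable (fun p : (ℤ×ℤ) × (ℤ×ℤ) => P p.1 * Q p.2) :=
    hc'.mul_of_nonneg hd' (fun i => hPnn i) (fun i => hQnn i)
  let e : (ℤ×ℤ) × (ℤ×ℤ) ≃ (ℤ×ℤ) × (ℤ×ℤ) :=
    { toFun := fun p => (p.1 + p.2, p.1)
      invFun := fun p => (p.2, p.1 - p.2)
      left_inv := fun p => by simp
      right_inv := fun p => by simp }
  have hH : Summable (fun p : (ℤ×ℤ) × (ℤ×ℤ) => P p.2 * Q (p.1 - p.2)) := by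
    rw [← e.summable_iff]
    exact hHprod.congr (fun p => by simp [e])
  have hsplit := (summable_prod_of_nonneg
      (f := fun p : (ℤ×ℤ) × (ℤ×ℤ) => P p.2 * Q (p.1 - p.2))
      (fun p => mul_nonneg (hPnn _) (hQnn _))).mp hH
  have hGsummable : Summable G := hsplit.2
  have hGtsum : ∑' n, G n = A * B := by
    have h1 : ∑' p : (ℤ×ℤ) × (ℤ×ℤ), P p.2 * Q (p.1 - p.2) = ∑' n, G n :=
      Summable.tsum_prod' hH hsplit.1
    have h2 : ∑' p : (ℤ×ℤ) × (ℤ×ℤ), P p.2 * Q (p.1 - p.2)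
        = ∑' p : (ℤ×ℤ) × (ℤ×ℤ), P p.1 * Q p.2 := by
      rw [← e.tsum_eq]
      exact tsum_congr (fun p => by simp [e])
    have h3 : ∑' p : (ℤ×ℤ) × (ℤ×ℤ), P p.1 * Q p.2 = A * B := by
      rw [Summable.tsum_prod' hHprod (fun b => hd'.mul_left (P b))]
      calc ∑' m, ∑' k, P m * Q k = ∑' m, P m * B := by
            exact tsum_congr (fun m => tsum_mul_left)
        _ = A * B := tsum_mul_right
    rw [← h1, h2, h3]
  -- final summation
  have htnn : ∀ n, 0 ≤ (1 + freqSq n) ^ ((1:ℝ)/2) * ‖fourierConv c d n‖ ^ 2 :=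
    fun n => mul_nonneg (Real.rpow_nonneg (base_pos n).le _) (sq_nonneg _)
  have htsummable : Summable (fun n => (1 + freqSq n) ^ ((1:ℝ)/2) * ‖fourierConv c d n‖ ^ 2) :=
    Summable.of_nonneg_of_le htnn main (hGsummable.mul_left (4*S))
  have hfinal : ∑' n, (1 + freqSq n) ^ ((1:ℝ)/2) * ‖fourierConv c d n‖ ^ 2 ≤ 4*S*(A*B) := by
    calc ∑' n, (1 + freqSq n) ^ ((1:ℝ)/2) * ‖fourierConv c d n‖ ^ 2
        ≤ ∑' n, (4*S) * G n := Summable.tsum_le_tsum main htsummable (hGsummable.mul_left (4*S))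
      _ = (4*S) * ∑' n, G n := tsum_mul_left
      _ = 4*S*(A*B) := by rw [hGtsum]
  have hHc : HsNorm ((1:ℝ)/2) c = Real.sqrt A := by
    unfold HsNorm; rw [hAdef, hPdef]
  have hHd : HsNorm ((3:ℝ)/2) d = Real.sqrt B := by
    unfold HsNorm; rw [hBdef, hQdef]
  have hHconv : HsNorm ((1:ℝ)/2) (fourierConv c d)
      = Real.sqrt (∑' n, (1 + freqSq n) ^ ((1:ℝ)/2) * ‖fourierConv c d n‖ ^ 2) := by
    unfold HsNorm
    rfl
  rw [hHc, hHd, hHconv]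
  calc Real.sqrt (∑' n, (1 + freqSq n) ^ ((1:ℝ)/2) * ‖fourierConv c d n‖ ^ 2)
      ≤ Real.sqrt (4*S*(A*B)) := Real.sqrt_le_sqrt hfinal
    _ = 2 * Real.sqrt S * Real.sqrt A * Real.sqrt B := by
        rw [show 4*S*(A*B) = (2 * Real.sqrt S * Real.sqrt A * Real.sqrt B)^2 by
          rw [mul_pow, mul_pow, mul_pow, Real.sq_sqrt hSpos.le, Real.sq_sqrt hA,
            Real.sq_sqrt hB]; ring]
        exact Real.sqrt_sq (by positivity)
end
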